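/- (Proposition 1.) There exist finite sets 𝒮, 𝒮′, 𝒳₁, 𝒳₂, a probability distribution P on 𝒮 × 𝒳₁ × 𝒳₂ whose marginal on 𝒮 has full support, and a function f : 𝒮 → 𝒮′ such that, writing (X₁←S), (X₂←S) for the channels of conditional probabilities P(X₁=x₁ | S=s), P(X₂=x₂ | S=s) and (X₁←f(S)), (X₂←f(S)) for the channels of conditional probabilities P(X₁=x₁ | f(S)=t), P(X₂=x₂ | f(S)=t) on the range of f, the following three statements hold: (1) S and X₁ are conditionally independent given f(S), i.e. P(X₁=x₁ | S=s) = P(X₁=x₁ | f(S)=f(s)) for all s, x₁; (2) (X₁←f(S)) ⪯ (X₂←f(S)) and ¬((X₂←f(S)) ⪯ (X₁←f(S))); (3) ¬((X₁←S) ⪯ (X₂←S)). -/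

import Mathlib

open Finset

/-- A probability distribution on a finite set. -/
def IsDist {S : Type} [Fintype S] (p : S → ℝ) : Prop :=
  (∀ s, 0 ≤ p s) ∧ ∑ s, p s = 1

/-- A channel from `S` to `X`: a column-stochastic matrix. -/
def IsChannel {S X : Type} [Fintype S] [Fintype X] (κ : X → S → ℝ) : Prop :=
  (∀ x s, 0 ≤ κ x s) ∧ ∀ s, ∑ x, κ x s = 1

/-- `κ₁` is a garbling of `κ₂` (the Blackwell order `κ₁ ⪯ κ₂`). -/
def IsGarbling {S X₁ X₂ : Type} [Fintype S] [Fintype X₁] [Fintype X₂]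
    (κ₁ : X₁ → S → ℝ) (κ₂ : X₂ → S → ℝ) : Prop :=
  ∃ lam : X₁ → X₂ → ℝ, IsChannel lam ∧ ∀ x₁ s, κ₁ x₁ s = ∑ x₂, lam x₁ x₂ * κ₂ x₂ s

/-- Optimal expected utility: maximum over decision rules `d : X → A`. -/
noncomputable def optUtility {S X A : Type} [Fintype S] [Fintype X] [Fintype A]
    (p : S → ℝ) (u : A × S → ℝ) (κ : X → S → ℝ) : ℝ :=
  ⨆ d : X → A, ∑ s, ∑ x, p s * κ x s * u (d x, s)

/-- Mutual information between input (with distribution `p`) and output of channel `κ`;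
terms with `κ x s = 0` are taken to be `0`. -/
noncomputable def mutualInfo {S X : Type} [Fintype S] [Fintype X]
    (p : S → ℝ) (κ : X → S → ℝ) : ℝ :=
  ∑ s, ∑ x, if κ x s = 0 then 0 else
    p s * κ x s * Real.log (κ x s / ∑ s', p s' * κ x s')

/-- Channel composition: `(κ·λ) x s = ∑ t, κ x t * λ t s`. -/
def chanComp {S T X : Type} [Fintype S] [Fintype T] [Fintype X]
    (κ : X → T → ℝ) (lam : T → S → ℝ) : X → S → ℝ :=
  fun x s => ∑ t, κ x t * lam t s

/-- Marginal on `S` of a joint distribution on `S × X₁ × X₂`. -/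
noncomputable def margS3 {S X₁ X₂ : Type} [Fintype S] [Fintype X₁] [Fintype X₂]
    (P : S × X₁ × X₂ → ℝ) (s : S) : ℝ := ∑ x₁, ∑ x₂, P (s, x₁, x₂)

/-- The channel `X₁ ← S` of conditional probabilities `P(X₁ = x₁ | S = s)`. -/
noncomputable def chan1of3 {S X₁ X₂ : Type} [Fintype S] [Fintype X₁] [Fintype X₂]
    (P : S × X₁ × X₂ → ℝ) (x₁ : X₁) (s : S) : ℝ :=
  (∑ x₂, P (s, x₁, x₂)) / margS3 P s

/-- The channel `X₂ ← S` of conditional probabilities `P(X₂ = x₂ | S = s)`. -/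
noncomputable def chan2of3 {S X₁ X₂ : Type} [Fintype S] [Fintype X₁] [Fintype X₂]
    (P : S × X₁ × X₂ → ℝ) (x₂ : X₂) (s : S) : ℝ :=
  (∑ x₁, P (s, x₁, x₂)) / margS3 P s

/-- Pushforward of a joint distribution on `S × X₁ × X₂` along `f : S → S'`. -/
noncomputable def push3 {S S' X₁ X₂ : Type} [Fintype S] [Fintype X₁] [Fintype X₂]
    [DecidableEq S'] (f : S → S') (P : S × X₁ × X₂ → ℝ) : S' × X₁ × X₂ → ℝ :=
  fun q => ∑ s ∈ Finset.univ.filter (fun s => f s = q.1), P (s, q.2.1, q.2.2)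

/-!
Take `S` uniform on `{0, 1, 2}` and let `f` merge `1` and `2`. `X₁` sees only `f(S)`, through
the channel with columns `(1, 0)` and `(1/2, 1/2)`; `X₂` reveals `S` exactly on `{0, 1}` and is
a fair coin at `S = 2`. Averaged over the merged states, `X₂`'s column becomes `(1/4, 3/4)`, which
is strictly more informative than `(1/2, 1/2)`. On `S` itself, the columns of `X₂` at `0` and `1`
are point masses, so a garbling of `X₂` into `X₁` must copy `X₁`'s columns there, and these force
the column at `S = 2` to be `(3/4, 1/4)` instead of `(1/2, 1/2)`.
-/

variable {S X₁ X₂ : Type}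

theorem IsChannel.le_one [Fintype S] [Fintype X₁] {κ : X₁ → S → ℝ} (hκ : IsChannel κ)
    (x : X₁) (s : S) : κ x s ≤ 1 :=
  hκ.2 s ▸ single_le_sum (fun y _ => hκ.1 y s) (mem_univ x)

theorem IsChannel.comp_right {S' : Type} [Fintype S] [Fintype S'] [Fintype X₁]
    {κ : X₁ → S' → ℝ} (hκ : IsChannel κ) (f : S → S') : IsChannel fun x s => κ x (f s) :=
  ⟨fun x s => hκ.1 x (f s), fun s => hκ.2 (f s)⟩

theorem garbling_eq_of_col_eq_single [Fintype X₂] [DecidableEq X₂] {κ₁ : X₁ → S → ℝ}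
    {κ₂ : X₂ → S → ℝ} {lam : X₁ → X₂ → ℝ} (h : ∀ x₁ s, κ₁ x₁ s = ∑ x₂, lam x₁ x₂ * κ₂ x₂ s)
    {s : S} {x₂ : X₂} (hs : ∀ y, κ₂ y s = if y = x₂ then 1 else 0) (x₁ : X₁) :
    lam x₁ x₂ = κ₁ x₁ s := by
  simp [h, hs]

def jointOfChannels (p : S → ℝ) (κ₁ : X₁ → S → ℝ) (κ₂ : X₂ → S → ℝ) : S × X₁ × X₂ → ℝ :=
  fun q => p q.1 * κ₁ q.2.1 q.1 * κ₂ q.2.2 q.1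

section Joint

variable {p : S → ℝ} {κ₁ : X₁ → S → ℝ} {κ₂ : X₂ → S → ℝ}

theorem sum_snd_jointOfChannels [Fintype S] [Fintype X₂] (h₂ : IsChannel κ₂) (s : S) (x₁ : X₁) :
    ∑ x₂, jointOfChannels p κ₁ κ₂ (s, x₁, x₂) = p s * κ₁ x₁ s := by
  simp [jointOfChannels, ← mul_sum, h₂.2]

theorem sum_fst_jointOfChannels [Fintype S] [Fintype X₁] (h₁ : IsChannel κ₁) (s : S) (x₂ : X₂) :
    ∑ x₁, jointOfChannels p κ₁ κ₂ (s, x₁, x₂) = p s * κ₂ x₂ s := by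
  simp [jointOfChannels, ← sum_mul, ← mul_sum, h₁.2]

variable [Fintype S] [Fintype X₁] [Fintype X₂]

theorem jointOfChannels_nonneg (hp : ∀ s, 0 ≤ p s) (h₁ : IsChannel κ₁) (h₂ : IsChannel κ₂)
    (q : S × X₁ × X₂) : 0 ≤ jointOfChannels p κ₁ κ₂ q :=
  mul_nonneg (mul_nonneg (hp _) (h₁.1 _ _)) (h₂.1 _ _)

theorem margS3_jointOfChannels (h₁ : IsChannel κ₁) (h₂ : IsChannel κ₂) (s : S) :
    margS3 (jointOfChannels p κ₁ κ₂) s = p s := by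
  simp [margS3, sum_snd_jointOfChannels h₂, ← mul_sum, h₁.2]

theorem sum_jointOfChannels (h₁ : IsChannel κ₁) (h₂ : IsChannel κ₂) :
    ∑ q, jointOfChannels p κ₁ κ₂ q = ∑ s, p s := by
  simp only [Fintype.sum_prod_type]
  exact sum_congr rfl fun s _ => margS3_jointOfChannels h₁ h₂ s

theorem chan1of3_jointOfChannels (h₁ : IsChannel κ₁) (h₂ : IsChannel κ₂) (hp : ∀ s, p s ≠ 0) :
    chan1of3 (jointOfChannels p κ₁ κ₂) = κ₁ := by
  ext x₁ s
  rw [chan1of3, sum_snd_jointOfChannels h₂, margS3_jointOfChannels h₁ h₂,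
    mul_div_cancel_left₀ _ (hp s)]

theorem chan2of3_jointOfChannels (h₁ : IsChannel κ₁) (h₂ : IsChannel κ₂) (hp : ∀ s, p s ≠ 0) :
    chan2of3 (jointOfChannels p κ₁ κ₂) = κ₂ := by
  ext x₂ s
  rw [chan2of3, sum_fst_jointOfChannels h₁, margS3_jointOfChannels h₁ h₂,
    mul_div_cancel_left₀ _ (hp s)]

end Joint

section Push

variable {S' : Type} [Fintype S] [Fintype X₁] [Fintype X₂] [DecidableEq S'] (f : S → S')

theorem sum_snd_push3 (P : S × X₁ × X₂ → ℝ) (t : S') (x₁ : X₁) :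
    ∑ x₂, push3 f P (t, x₁, x₂) = ∑ s ∈ univ.filter (fun s => f s = t), ∑ x₂, P (s, x₁, x₂) := by
  simp only [push3]
  exact sum_comm

theorem sum_fst_push3 (P : S × X₁ × X₂ → ℝ) (t : S') (x₂ : X₂) :
    ∑ x₁, push3 f P (t, x₁, x₂) = ∑ s ∈ univ.filter (fun s => f s = t), ∑ x₁, P (s, x₁, x₂) := by
  simp only [push3]
  exact sum_comm

theorem margS3_push3 [Fintype S'] (P : S × X₁ × X₂ → ℝ) (t : S') :
    margS3 (push3 f P) t = ∑ s ∈ univ.filter (fun s => f s = t), margS3 P s := by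
  simp only [margS3]
  rw [sum_congr rfl fun x₁ _ => sum_snd_push3 f P t x₁]
  exact sum_comm

variable [Fintype S'] {p : S → ℝ} {κ₁ : X₁ → S → ℝ} {κ₂ : X₂ → S → ℝ}

theorem chan1of3_push3_jointOfChannels (h₁ : IsChannel κ₁) (h₂ : IsChannel κ₂) (x₁ : X₁)
    (t : S') : chan1of3 (push3 f (jointOfChannels p κ₁ κ₂)) x₁ t =
      (∑ s ∈ univ.filter (fun s => f s = t), p s * κ₁ x₁ s) /
        ∑ s ∈ univ.filter (fun s => f s = t), p s := by
  simp only [chan1of3, sum_snd_push3, margS3_push3, sum_snd_jointOfChannels h₂,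
    margS3_jointOfChannels h₁ h₂]

theorem chan2of3_push3_jointOfChannels (h₁ : IsChannel κ₁) (h₂ : IsChannel κ₂) (x₂ : X₂)
    (t : S') : chan2of3 (push3 f (jointOfChannels p κ₁ κ₂)) x₂ t =
      (∑ s ∈ univ.filter (fun s => f s = t), p s * κ₂ x₂ s) /
        ∑ s ∈ univ.filter (fun s => f s = t), p s := by
  simp only [chan2of3, sum_fst_push3, margS3_push3, sum_fst_jointOfChannels h₁,
    margS3_jointOfChannels h₁ h₂]

theorem chan1of3_push3_jointOfChannels_comp_right {κ : X₁ → S' → ℝ} (hκ : IsChannel κ)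
    (h₂ : IsChannel κ₂) (hp : ∀ s, 0 < p s) (x₁ : X₁) (s : S) :
    chan1of3 (push3 f (jointOfChannels p (fun x u => κ x (f u)) κ₂)) x₁ (f s) = κ x₁ (f s) := by
  have hfiber : ∑ s' ∈ univ.filter (fun s' => f s' = f s), p s' * κ x₁ (f s') =
      (∑ s' ∈ univ.filter (fun s' => f s' = f s), p s') * κ x₁ (f s) := by
    rw [sum_mul]
    exact sum_congr rfl fun s' hs' => by rw [(mem_filter.1 hs').2]
  have hmass : 0 < ∑ s' ∈ univ.filter (fun s' => f s' = f s), p s' :=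
    sum_pos (fun s' _ => hp s') ⟨s, by simp⟩
  rw [chan1of3_push3_jointOfChannels f (hκ.comp_right f) h₂, hfiber,
    mul_div_cancel_left₀ _ hmass.ne']

end Push

def paradoxCoarsening : Fin 3 → Fin 2 := ![0, 1, 1]

noncomputable def paradoxChan₁ : Matrix (Fin 2) (Fin 2) ℝ := !![1, 1/2; 0, 1/2]

noncomputable def paradoxChan₂ : Matrix (Fin 2) (Fin 3) ℝ := !![1, 0, 1/2; 0, 1, 1/2]

noncomputable def paradoxCoarseChan₂ : Matrix (Fin 2) (Fin 2) ℝ := !![1, 1/4; 0, 3/4]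

noncomputable def paradoxJoint : Fin 3 × Fin 2 × Fin 2 → ℝ :=
  jointOfChannels (fun _ => 1/3) (fun x s => paradoxChan₁ x (paradoxCoarsening s)) paradoxChan₂

theorem isChannel_paradoxChan₁ : IsChannel paradoxChan₁ := by
  refine ⟨fun x s => ?_, fun s => ?_⟩ <;> fin_cases s <;> try fin_cases x
  all_goals norm_num [paradoxChan₁, Fin.sum_univ_two]

theorem isChannel_paradoxChan₂ : IsChannel paradoxChan₂ := by
  refine ⟨fun x s => ?_, fun s => ?_⟩ <;> fin_cases s <;> try fin_cases x
  all_goals norm_num [paradoxChan₂, Fin.sum_univ_two]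

theorem chan2of3_push3_paradoxJoint :
    chan2of3 (push3 paradoxCoarsening paradoxJoint) = paradoxCoarseChan₂ := by
  ext x t
  rw [paradoxJoint, chan2of3_push3_jointOfChannels _ (isChannel_paradoxChan₁.comp_right _)
    isChannel_paradoxChan₂]
  fin_cases x <;> fin_cases t <;> simp only [sum_filter, Fin.sum_univ_three] <;>
    norm_num [paradoxCoarsening, paradoxChan₂, paradoxCoarseChan₂, Matrix.cons_val_two]

theorem paradoxCoarsening_surjective : Function.Surjective paradoxCoarsening := by
  decide

theorem chan1of3_paradoxJoint :
    chan1of3 paradoxJoint = fun x s => paradoxChan₁ x (paradoxCoarsening s) :=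
  chan1of3_jointOfChannels (isChannel_paradoxChan₁.comp_right _) isChannel_paradoxChan₂
    fun _ => by norm_num

theorem chan2of3_paradoxJoint : chan2of3 paradoxJoint = paradoxChan₂ :=
  chan2of3_jointOfChannels (isChannel_paradoxChan₁.comp_right _) isChannel_paradoxChan₂
    fun _ => by norm_num

theorem chan1of3_push3_paradoxJoint :
    chan1of3 (push3 paradoxCoarsening paradoxJoint) = paradoxChan₁ := by
  ext x t
  obtain ⟨s, rfl⟩ := paradoxCoarsening_surjective t
  exact chan1of3_push3_jointOfChannels_comp_right _ isChannel_paradoxChan₁ isChannel_paradoxChan₂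
    (fun _ => by norm_num) x s

theorem isGarbling_paradoxChan₁_paradoxCoarseChan₂ :
    IsGarbling paradoxChan₁ paradoxCoarseChan₂ := by
  refine ⟨!![1, 1/3; 0, 2/3], ⟨fun x y => ?_, fun y => ?_⟩, fun x t => ?_⟩
  · fin_cases x <;> fin_cases y <;> norm_num
  · fin_cases y <;> norm_num [Fin.sum_univ_two]
  · fin_cases x <;> fin_cases t <;> norm_num [Fin.sum_univ_two, paradoxChan₁, paradoxCoarseChan₂]

theorem not_isGarbling_paradoxCoarseChan₂_paradoxChan₁ :
    ¬ IsGarbling paradoxCoarseChan₂ paradoxChan₁ := by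
  rintro ⟨lam, hlam, h⟩
  have h₁₀ : lam 1 0 = 0 := by
    rw [garbling_eq_of_col_eq_single h (s := 0) fun y => by fin_cases y <;> simp [paradoxChan₁]]
    simp [paradoxCoarseChan₂]
  have h₁₁ := h 1 1
  simp only [Fin.sum_univ_two, h₁₀] at h₁₁
  norm_num [paradoxChan₁, paradoxCoarseChan₂] at h₁₁
  linarith [hlam.le_one 1 1]

theorem not_isGarbling_paradoxChan₁_comp :
    ¬ IsGarbling (fun x s => paradoxChan₁ x (paradoxCoarsening s)) paradoxChan₂ := by
  rintro ⟨lam, -, h⟩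
  have h₁₀ : lam 1 0 = 0 := by
    rw [garbling_eq_of_col_eq_single h (s := 0) fun y => by fin_cases y <;> simp [paradoxChan₂]]
    simp [paradoxChan₁, paradoxCoarsening]
  have h₁₁ : lam 1 1 = 1/2 := by
    rw [garbling_eq_of_col_eq_single h (s := 1) fun y => by fin_cases y <;> simp [paradoxChan₂]]
    simp [paradoxChan₁, paradoxCoarsening]
  have h₁₂ := h 1 2
  simp only [Fin.sum_univ_two, h₁₀, h₁₁] at h₁₂
  norm_num [paradoxChan₁, paradoxChan₂, paradoxCoarsening, Matrix.cons_val_two] at h₁₂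

theorem prop1_coarse_graining_paradox :
    ∃ (nS nS' n1 n2 : ℕ) (P : Fin nS × Fin n1 × Fin n2 → ℝ) (f : Fin nS → Fin nS'),
      (∀ q, 0 ≤ P q) ∧ (∑ q, P q = 1) ∧ (∀ s, 0 < margS3 P s) ∧
      Function.Surjective f ∧
      -- (1) S and X₁ are conditionally independent given f(S)
      (∀ s x₁, chan1of3 P x₁ s = chan1of3 (push3 f P) x₁ (f s)) ∧
      -- (2) (X₁ ← f(S)) ≺ (X₂ ← f(S))
      IsGarbling (chan1of3 (push3 f P)) (chan2of3 (push3 f P)) ∧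
      ¬ IsGarbling (chan2of3 (push3 f P)) (chan1of3 (push3 f P)) ∧
      -- (3) ¬((X₁ ← S) ⪯ (X₂ ← S))
      ¬ IsGarbling (chan1of3 P) (chan2of3 P) := by
  have h₁ := isChannel_paradoxChan₁.comp_right paradoxCoarsening
  have h₂ := isChannel_paradoxChan₂
  refine ⟨3, 2, 2, 2, paradoxJoint, paradoxCoarsening, fun q => ?_, ?_, fun s => ?_,
    paradoxCoarsening_surjective, fun s x => ?_, ?_, ?_, ?_⟩
  · exact jointOfChannels_nonneg (fun _ => by norm_num) h₁ h₂ q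
  · simp [paradoxJoint, sum_jointOfChannels h₁ h₂]
  · simp [paradoxJoint, margS3_jointOfChannels h₁ h₂]
  · rw [chan1of3_paradoxJoint, chan1of3_push3_paradoxJoint]
  · rw [chan1of3_push3_paradoxJoint, chan2of3_push3_paradoxJoint]
    exact isGarbling_paradoxChan₁_paradoxCoarseChan₂
  · rw [chan1of3_push3_paradoxJoint, chan2of3_push3_paradoxJoint]
    exact not_isGarbling_paradoxCoarseChan₂_paradoxChan₁
  · rw [chan1of3_paradoxJoint, chan2of3_paradoxJoint]
    exact not_isGarbling_paradoxChan₁_comp
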